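/- Let (Γ, L) be a strongly connected periodic graph, Φ a periodic realization, and x₀ ∈ V_Γ. If C₂(Γ, Φ, x₀) := sup_{y ∈ V_Γ} (d_Γ(x₀,y) − d_{P_Γ,Φ}(x₀,y)) < 1, then x₀ is P-initial: for every nonzero vertex u of the growth polytope P_Γ there exists a cycle q in Γ/L with ν(q) = u whose support contains the image of x₀. -/

import Mathlib

open Pointwise

/-- An `n`-dimensional periodic graph, presented concretely: since the action of `L ≅ ℤⁿ` on the
vertex/edge sets is free with finite quotient, vertices are `(Fin n → ℤ) × V0` and edges are
translates of finitely many edge classes `E0`; the class `e` joins `(0, srcV e)` to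
`(vec e, tgtV e)` and has weight `wt e > 0`. -/
structure PeriodicGraph (n : ℕ) where
  V0 : Type
  E0 : Type
  fintypeV0 : Fintype V0
  fintypeE0 : Fintype E0
  srcV : E0 → V0
  tgtV : E0 → V0
  vec : E0 → Fin n → ℤ
  wt : E0 → ℕ
  wt_pos : ∀ e, 0 < wt e

namespace PeriodicGraph

variable {n : ℕ}

/-- `Reaches G x y w`: there is a directed walk in `Γ` from `x` to `y` of total weight `w`. -/
inductive Reaches (G : PeriodicGraph n) :
    ((Fin n → ℤ) × G.V0) → ((Fin n → ℤ) × G.V0) → ℕ → Prop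
  | refl (x : (Fin n → ℤ) × G.V0) : Reaches G x x 0
  | tail {x : (Fin n → ℤ) × G.V0} {w : ℕ} (u : Fin n → ℤ) (e : G.E0) :
      Reaches G x (u, G.srcV e) w → Reaches G x (u + G.vec e, G.tgtV e) (w + G.wt e)

/-- `Γ` is strongly connected: any vertex reaches any other by a directed walk. -/
def StronglyConnected (G : PeriodicGraph n) : Prop :=
  ∀ x y : (Fin n → ℤ) × G.V0, ∃ w : ℕ, G.Reaches x y w

/-- The weighted graph distance `d_Γ(x,y)` (the minimal weight of a walk from `x` to `y`). -/
noncomputable def dist (G : PeriodicGraph n) (x y : (Fin n → ℤ) × G.V0) : ℕ :=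
  sInf {w : ℕ | G.Reaches x y w}

/-- A cycle in the quotient graph `Γ/L`: a nonempty chained list of edge classes, closed, whose
visited vertices are pairwise distinct. -/
def IsQCycle (G : PeriodicGraph n) (l : List G.E0) : Prop :=
  ∃ h : l ≠ [], l.Chain' (fun e f => G.tgtV e = G.srcV f) ∧
    G.tgtV (l.getLast h) = G.srcV (l.head h) ∧ (l.map G.tgtV).Nodup

/-- The net translation vector `μ(⟨q⟩)` of a quotient walk. -/
def qvec (G : PeriodicGraph n) (l : List G.E0) : Fin n → ℤ := (l.map G.vec).sum

/-- The total weight `w(q)` of a quotient walk. -/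
def qwt (G : PeriodicGraph n) (l : List G.E0) : ℕ := (l.map G.wt).sum

/-- The normalization `ν(q) = μ(⟨q⟩)/w(q)` of a quotient cycle. -/
noncomputable def nu (G : PeriodicGraph n) (l : List G.E0) : Fin n → ℝ :=
  (G.qwt l : ℝ)⁻¹ • fun i => (G.qvec l i : ℝ)

/-- The growth polytope `P_Γ`: the convex hull of `0` together with the normalized translation
vectors of all cycles of `Γ/L`. -/
noncomputable def growthPolytope (G : PeriodicGraph n) : Set (Fin n → ℝ) :=
  convexHull ℝ (insert 0 {x : Fin n → ℝ | ∃ l : List G.E0, G.IsQCycle l ∧ x = G.nu l})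

/-- The gauge `d_P(y) = inf {t ≥ 0 | y ∈ t·P}` of a set `P`. -/
noncomputable def pgauge {n : ℕ} (P : Set (Fin n → ℝ)) (y : Fin n → ℝ) : ℝ :=
  sInf {t : ℝ | 0 ≤ t ∧ y ∈ t • P}

/-- A periodic realization `Φ : V_Γ → L ⊗ ℝ`, i.e. `Φ(u + x) = u + Φ(x)` for `u ∈ L`. -/
def IsRealization (G : PeriodicGraph n) (Φ : (Fin n → ℤ) × G.V0 → Fin n → ℝ) : Prop :=
  ∀ (u : Fin n → ℤ) (x : (Fin n → ℤ) × G.V0),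
    Φ (u + x.1, x.2) = (fun i => (u i : ℝ)) + Φ x

/-- `x₀` is `P`-initial: every nonzero vertex (extreme point) `u` of `P_Γ` is the normalized
vector of some cycle of `Γ/L` whose support contains the image of `x₀`. -/
def PInitial (G : PeriodicGraph n) (x₀ : (Fin n → ℤ) × G.V0) : Prop :=
  ∀ u ∈ Set.extremePoints ℝ G.growthPolytope, u ≠ 0 →
    ∃ l : List G.E0, G.IsQCycle l ∧ G.nu l = u ∧ x₀.2 ∈ l.map G.tgtV

end PeriodicGraph

/-- A function `ℕ → ℕ` is of quasi-polynomial type if it eventually agrees with a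
quasi-polynomial. -/
def IsQuasiPolynomialType (f : ℕ → ℕ) : Prop :=
  ∃ Np : ℕ, 0 < Np ∧ ∃ Q : ℕ → Polynomial ℚ, ∃ M : ℕ,
    ∀ i : ℕ, M ≤ i → (f i : ℚ) = (Q (i % Np)).eval (i : ℚ)

/-!
A nonzero extreme point `u` of `P_Γ` is `ν(q₀)` for a cycle `q₀` of `Γ/L`. Since
`μ(q₀) = w(q₀) • u ∈ w(q₀) • P_Γ`, the vertex `y = x₀ + μ(q₀)` has `d_{P_Γ,Φ}(x₀, y) ≤ w(q₀)`,
and `C₂ < 1` together with integrality of `d_Γ` gives `d_Γ(x₀, y) ≤ w(q₀)`. A shortest walk from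
`x₀` to `y` projects to a closed walk at the image of `x₀` in `Γ/L`; it splits into cycles, one
of them, `q`, through `x₀`. As `P_Γ` is convex and contains `0`, the remaining cycles and the
weight deficit give `w(q₀) • u = w(q) • ν(q) + (w(q₀) - w(q)) • z` with `z ∈ P_Γ`, and
extremality of `u` forces `ν(q) = u`.
-/

section ExtremePoints

variable {𝕜 E : Type*} [Field 𝕜] [LinearOrder 𝕜] [IsStrictOrderedRing 𝕜] [AddCommGroup E]
  [Module 𝕜 E] {s : Set E} {u x y : E} {a b : 𝕜}

theorem eq_of_mem_extremePoints_of_add_smul_eq (hu : u ∈ s.extremePoints 𝕜) (hx : x ∈ s)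
    (hy : y ∈ s) (ha : 0 < a) (hb : 0 ≤ b) (h : (a + b) • u = a • x + b • y) : x = u := by
  rcases hb.eq_or_lt with rfl | hb
  · simp only [add_zero, zero_smul] at h
    exact (smul_right_injective E ha.ne' h).symm
  have hab : 0 < a + b := add_pos ha hb
  refine hu.2 hx hy ⟨a / (a + b), b / (a + b), div_pos ha hab, div_pos hb hab, ?_, ?_⟩
  · rw [← add_div, div_self hab.ne']
  · rw [div_eq_inv_mul, div_eq_inv_mul, mul_smul, mul_smul, ← smul_add, ← h,
      inv_smul_smul₀ hab.ne']

end ExtremePoints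

namespace PeriodicGraph

variable {n : ℕ} {G : PeriodicGraph n}

variable (G) in
inductive QWalk : G.V0 → G.V0 → List G.E0 → Prop
  | nil (v : G.V0) : QWalk v v []
  | cons (e : G.E0) {v : G.V0} {l : List G.E0} :
      QWalk (G.tgtV e) v l → QWalk (G.srcV e) v (e :: l)

namespace QWalk

variable {a b c : G.V0} {l l' : List G.E0}

theorem append (h : G.QWalk a b l) (h' : G.QWalk b c l') : G.QWalk a c (l ++ l') := by
  induction h with
  | nil => exact h'
  | cons e _ ih => exact cons e (ih h')

theorem eq_of_nil (h : G.QWalk a b []) : a = b := by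
  cases h
  rfl

theorem srcV_head (h : G.QWalk a b l) (hl : l ≠ []) : G.srcV (l.head hl) = a := by
  cases h with
  | nil => exact absurd rfl hl
  | cons => rfl

theorem tgtV_getLast (h : G.QWalk a b l) (hl : l ≠ []) : G.tgtV (l.getLast hl) = b := by
  induction h with
  | nil => exact absurd rfl hl
  | @cons e _ l h ih =>
    cases l with
    | nil => exact h.eq_of_nil
    | cons => exact ih (List.cons_ne_nil _ _)

theorem isChain (h : G.QWalk a b l) : l.IsChain (fun e f => G.tgtV e = G.srcV f) := by
  induction h with
  | nil => exact List.isChain_nil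
  | @cons e _ l h ih =>
    refine List.isChain_cons.2 ⟨fun f hf => ?_, ih⟩
    cases l with
    | nil => simp at hf
    | cons g t =>
      obtain rfl : g = f := by simpa using hf
      exact (h.srcV_head (List.cons_ne_nil _ _)).symm

theorem isQCycle (h : G.QWalk a a l) (hl : l ≠ []) (hnd : (l.map G.tgtV).Nodup) :
    G.IsQCycle l :=
  ⟨hl, h.isChain, by rw [h.tgtV_getLast hl, h.srcV_head hl], hnd⟩

theorem mem_map_tgtV (h : G.QWalk a b l) (hl : l ≠ []) : b ∈ l.map G.tgtV :=
  h.tgtV_getLast hl ▸ List.mem_map_of_mem (List.getLast_mem hl)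

theorem exists_append_of_mem {x : G.V0} (h : G.QWalk a b l) (hx : x ∈ l.map G.tgtV) :
    ∃ l₁ l₂, l = l₁ ++ l₂ ∧ l₁ ≠ [] ∧ G.QWalk a x l₁ ∧ G.QWalk x b l₂ := by
  induction h with
  | nil => simp at hx
  | cons e h ih =>
    rcases List.mem_cons.1 hx with rfl | hx
    · exact ⟨[e], _, rfl, List.cons_ne_nil _ _, cons e (nil _), h⟩
    · obtain ⟨l₁, l₂, rfl, -, h₁, h₂⟩ := ih hx
      exact ⟨e :: l₁, l₂, rfl, List.cons_ne_nil _ _, cons e h₁, h₂⟩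

theorem exists_closed_of_not_nodup (h : G.QWalk a b l) (hnd : ¬(l.map G.tgtV).Nodup) :
    ∃ A B D c, l = A ++ B ++ D ∧ A ≠ [] ∧ B ≠ [] ∧
      G.QWalk a c A ∧ G.QWalk c c B ∧ G.QWalk c b D := by
  induction h with
  | nil => simp at hnd
  | cons e h ih =>
    rw [List.map_cons, List.nodup_cons, not_and_or, not_not] at hnd
    rcases hnd with hmem | hnd
    · obtain ⟨B, D, rfl, hB, hBw, hDw⟩ := h.exists_append_of_mem hmem
      exact ⟨[e], B, D, _, rfl, List.cons_ne_nil _ _, hB, cons e (nil _), hBw, hDw⟩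
    · obtain ⟨A, B, D, c, rfl, -, hB, hAw, hBw, hDw⟩ := ih hnd
      exact ⟨e :: A, B, D, c, rfl, List.cons_ne_nil _ _, hB, cons e hAw, hBw, hDw⟩

end QWalk

theorem qvec_append (l l' : List G.E0) : G.qvec (l ++ l') = G.qvec l + G.qvec l' := by
  simp [qvec]

theorem qwt_append (l l' : List G.E0) : G.qwt (l ++ l') = G.qwt l + G.qwt l' := by
  simp [qwt]

theorem qwt_pos {l : List G.E0} (hl : l ≠ []) : 0 < G.qwt l := by
  obtain ⟨e, t, rfl⟩ := List.exists_cons_of_ne_nil hl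
  simpa [qwt] using Nat.lt_add_right _ (G.wt_pos e)

theorem QWalk.exists_cycle_decomposition {v : G.V0} {l : List G.E0} (h : G.QWalk v v l)
    (hl : l ≠ []) :
    ∃ c, G.IsQCycle c ∧ v ∈ c.map G.tgtV ∧ ∃ L : List (List G.E0), (∀ c' ∈ L, G.IsQCycle c') ∧
      G.qvec l = G.qvec c + (L.map G.qvec).sum ∧ G.qwt l = G.qwt c + (L.map G.qwt).sum := by
  induction hlen : l.length using Nat.strong_induction_on generalizing v l with
  | _ m ih =>
  by_cases hnd : (l.map G.tgtV).Nodup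
  · exact ⟨l, h.isQCycle hl hnd, h.mem_map_tgtV hl, [], by simp, by simp, by simp⟩
  obtain ⟨A, B, D, a, rfl, hA, hB, hAw, hBw, hDw⟩ := h.exists_closed_of_not_nodup hnd
  have hA₀ := List.length_pos_iff.2 hA
  have hB₀ := List.length_pos_iff.2 hB
  obtain ⟨c, hc, hvc, L₁, hL₁, hvec₁, hwt₁⟩ :=
    ih _ (by simp only [← hlen, List.length_append]; omega) (hAw.append hDw) (by simp [hA]) rfl
  obtain ⟨c', hc', -, L₂, hL₂, hvec₂, hwt₂⟩ :=
    ih _ (by simp only [← hlen, List.length_append]; omega) hBw hB rfl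
  refine ⟨c, hc, hvc, L₁ ++ c' :: L₂, ?_, ?_, ?_⟩
  · simp only [List.mem_append, List.mem_cons]
    rintro c'' (hc'' | rfl | hc'')
    exacts [hL₁ c'' hc'', hc', hL₂ c'' hc'']
  · simp only [qvec_append, List.map_append, List.map_cons, List.sum_append,
      List.sum_cons] at hvec₁ hvec₂ ⊢
    rw [add_right_comm, hvec₁, hvec₂]
    abel
  · simp only [qwt_append, List.map_append, List.map_cons, List.sum_append,
      List.sum_cons] at hwt₁ hwt₂ ⊢
    omega

theorem Reaches.exists_qWalk {x y : (Fin n → ℤ) × G.V0} {w : ℕ} (h : G.Reaches x y w) :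
    ∃ l, G.QWalk x.2 y.2 l ∧ G.qwt l = w ∧ x.1 + G.qvec l = y.1 := by
  induction h with
  | refl => exact ⟨[], QWalk.nil _, rfl, by simp [qvec]⟩
  | tail u e _ ih =>
    obtain ⟨l, hl, hwt, hvec⟩ := ih
    refine ⟨l ++ [e], hl.append (.cons e (.nil _)), ?_, ?_⟩
    · simp [← hwt, qwt]
    · rw [qvec_append, ← add_assoc, hvec]
      simp [qvec]

theorem qwt_smul_nu {l : List G.E0} (hl : l ≠ []) :
    (G.qwt l : ℝ) • G.nu l = fun i => (G.qvec l i : ℝ) :=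
  smul_inv_smul₀ (Nat.cast_pos.2 (G.qwt_pos hl)).ne' _

theorem convex_growthPolytope : Convex ℝ G.growthPolytope :=
  convex_convexHull ℝ _

theorem zero_mem_growthPolytope : (0 : Fin n → ℝ) ∈ G.growthPolytope :=
  subset_convexHull ℝ _ (Set.mem_insert _ _)

theorem nu_mem_growthPolytope {c : List G.E0} (hc : G.IsQCycle c) : G.nu c ∈ G.growthPolytope :=
  subset_convexHull ℝ _ (Set.mem_insert_of_mem _ ⟨c, hc, rfl⟩)

theorem exists_isQCycle_nu_eq_of_mem_extremePoints {u : Fin n → ℝ}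
    (hu : u ∈ G.growthPolytope.extremePoints ℝ) (hu0 : u ≠ 0) :
    ∃ l, G.IsQCycle l ∧ G.nu l = u := by
  rcases extremePoints_convexHull_subset hu with rfl | ⟨l, hl, rfl⟩
  exacts [absurd rfl hu0, ⟨l, hl, rfl⟩]

theorem exists_sum_qvec_eq_smul {L : List (List G.E0)} (hL : ∀ c ∈ L, G.IsQCycle c) :
    ∃ z ∈ G.growthPolytope,
      (fun i => ((L.map G.qvec).sum i : ℝ)) = ((L.map G.qwt).sum : ℝ) • z := by
  induction L with
  | nil => exact ⟨0, zero_mem_growthPolytope, by funext; simp⟩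
  | cons c L ih =>
    obtain ⟨z, hz, hzL⟩ := ih fun c' hc' => hL c' (List.mem_cons_of_mem _ hc')
    have hc := hL c List.mem_cons_self
    obtain ⟨z', hz', hz'eq⟩ := convex_growthPolytope.exists_mem_add_smul_eq
      (nu_mem_growthPolytope hc) hz (Nat.cast_nonneg (G.qwt c)) (Nat.cast_nonneg _)
    refine ⟨z', hz', ?_⟩
    rw [List.map_cons, List.sum_cons, List.map_cons, List.sum_cons, Nat.cast_add, hz'eq,
      qwt_smul_nu hc.1, ← hzL]
    funext i
    simp

theorem pgauge_smul_le {P : Set (Fin n → ℝ)} {x : Fin n → ℝ} (hx : x ∈ P) {t : ℝ} (ht : 0 ≤ t) :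
    pgauge P (t • x) ≤ t :=
  csInf_le ⟨0, fun _ hs => hs.1⟩ ⟨ht, Set.smul_mem_smul_set hx⟩

theorem exists_isQCycle_nu_eq_of_qWalk {v : G.V0} {l₀ l : List G.E0} (hl₀ : l₀ ≠ [])
    (hu : G.nu l₀ ∈ G.growthPolytope.extremePoints ℝ) (hw : G.QWalk v v l) (hl : l ≠ [])
    (hvec : G.qvec l = G.qvec l₀) (hwt : G.qwt l ≤ G.qwt l₀) :
    ∃ c, G.IsQCycle c ∧ G.nu c = G.nu l₀ ∧ v ∈ c.map G.tgtV := by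
  obtain ⟨c, hc, hvc, L, hL, hvecL, hwtL⟩ := hw.exists_cycle_decomposition hl
  obtain ⟨z, hz, hzL⟩ := exists_sum_qvec_eq_smul hL
  set w₀ : ℝ := (G.qwt l₀ : ℝ)
  set w : ℝ := (G.qwt c : ℝ)
  set W : ℝ := (((L.map G.qwt).sum : ℕ) : ℝ)
  have hW : 0 ≤ W := Nat.cast_nonneg _
  have hslack : 0 ≤ w₀ - w - W := by
    have : G.qwt c + (L.map G.qwt).sum ≤ G.qwt l₀ := hwtL ▸ hwt
    simp only [w₀, w, W, sub_sub, sub_nonneg]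
    exact_mod_cast this
  obtain ⟨z', hz', hz'eq⟩ :=
    convex_growthPolytope.exists_mem_add_smul_eq hz zero_mem_growthPolytope hW hslack
  rw [add_sub_cancel, smul_zero, add_zero] at hz'eq
  refine ⟨c, hc, eq_of_mem_extremePoints_of_add_smul_eq hu (nu_mem_growthPolytope hc) hz'
    (Nat.cast_pos.2 (G.qwt_pos hc.1)) (b := w₀ - w) (by linarith) ?_, hvc⟩
  calc (w + (w₀ - w)) • G.nu l₀
    _ = fun i => (G.qvec c i : ℝ) + ((L.map G.qvec).sum i : ℝ) := by
      rw [add_sub_cancel, qwt_smul_nu hl₀, ← hvec, hvecL]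
      funext i
      simp
    _ = w • G.nu c + (w₀ - w) • z' := by
      rw [qwt_smul_nu hc.1, hz'eq, ← hzL]
      rfl

end PeriodicGraph

/-- If `C₂(Γ, Φ, x₀) = sup_y (d_Γ(x₀,y) − d_{P_Γ,Φ}(x₀,y)) < 1` (expressed by
a bound `c < 1`), then `x₀` is `P`-initial. -/
theorem pInitial_of_C2_lt_one {n : ℕ} (G : PeriodicGraph n) (hsc : G.StronglyConnected)
    (Φ : (Fin n → ℤ) × G.V0 → Fin n → ℝ) (hΦ : G.IsRealization Φ)
    (x₀ : (Fin n → ℤ) × G.V0)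
    (hC2 : ∃ c : ℝ, c < 1 ∧ ∀ y : (Fin n → ℤ) × G.V0,
      (G.dist x₀ y : ℝ) - PeriodicGraph.pgauge G.growthPolytope (Φ y - Φ x₀) ≤ c) :
    G.PInitial x₀ := by
  obtain ⟨C, hC1, hC⟩ := hC2
  intro u hu hu0
  obtain ⟨l₀, hl₀, rfl⟩ := PeriodicGraph.exists_isQCycle_nu_eq_of_mem_extremePoints hu hu0
  set y : (Fin n → ℤ) × G.V0 := (G.qvec l₀ + x₀.1, x₀.2)
  have hΦy : Φ y - Φ x₀ = (G.qwt l₀ : ℝ) • G.nu l₀ := by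
    rw [hΦ, add_sub_cancel_right, PeriodicGraph.qwt_smul_nu hl₀.1]
  have hdist : G.dist x₀ y ≤ G.qwt l₀ := by
    have hgauge := PeriodicGraph.pgauge_smul_le hu.1 (Nat.cast_nonneg (G.qwt l₀))
    have hCy := hC y
    rw [hΦy] at hCy
    exact Nat.lt_succ_iff.1 (by exact_mod_cast (by linarith : (G.dist x₀ y : ℝ) < G.qwt l₀ + 1))
  obtain ⟨l, hl, hwt, hvec⟩ :=
    (Nat.sInf_mem (hsc x₀ y) : G.Reaches x₀ y (G.dist x₀ y)).exists_qWalk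
  have hvec' : G.qvec l = G.qvec l₀ := add_left_cancel (hvec.trans (add_comm _ _))
  have hne : l ≠ [] := by
    rintro rfl
    apply hu0
    rw [PeriodicGraph.nu, ← hvec']
    exact smul_eq_zero_of_right _ (funext fun i => by simp [PeriodicGraph.qvec])
  exact PeriodicGraph.exists_isQCycle_nu_eq_of_qWalk hl₀.1 hu hl hne hvec' (hwt ▸ hdist)
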